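/- arXiv:2103.10071 — 2 statements merged into one kernel-verified Lean document; each statement's English description precedes it below -/
import Mathlib

section
/- If g : (ZMod p)^{n-s} → ZMod (p^k) is a generalized bent function with dual g* and sign function μ_g, and f : (ZMod p)^n → ZMod (p^k) is defined by f(x) = g(x M^T R^T) + p^{k−1}(x·t) for an invertible matrix M ∈ GL(n, 𝔽_p), a vector t ∈ (ZMod p)^n, and a full-rank (n−s)×n matrix R over 𝔽_p, then f is a generalized s-plateaued function: |W_f(a)| = p^{(n+s)/2} for a in the set {t + eM : e ∈ rowspace(R)} and W_f(a) = 0 otherwise. -/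
/-- The complex primitive `m`-th root of unity `e^{2πi/m}`. -/
noncomputable def zeta (m : ℕ) : ℂ := Complex.exp (2 * Real.pi * Complex.I / m)

/-- Inner product on `(ZMod p)^n`. -/
def dot {p n : ℕ} (a x : Fin n → ZMod p) : ZMod p := ∑ i, a i * x i

/-- Walsh transform of a generalized p-ary function `f : (ZMod p)^n → ZMod (p^k)`. -/
noncomputable def walsh (p n k : ℕ) [Fact (Nat.Prime p)]
    (f : (Fin n → ZMod p) → ZMod (p ^ k)) (a : Fin n → ZMod p) : ℂ :=
  ∑ x : Fin n → ZMod p, zeta (p ^ k) ^ (f x).val * zeta p ^ ((-(dot a x)).val)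

/-!
Writing `y = M x`, the term `p^(k-1) (x·t)` of `f` only contributes the character `ζ_p^(x·t)`,
so `W_f(a)` is the Walsh transform of `y ↦ g (R y)` at `b = (a - t) M⁻¹`. As `y ↦ R y` is onto,
every fibre has `p^s` points: if `b = c R` the sum is `p^s W_g(c)`, of modulus `p^((n+s)/2)`.
Otherwise some `v ∈ ker R` has `b·v ≠ 0`, and translating `y` by `v` multiplies the sum by
`ζ_p^(-b·v) ≠ 1`, so the sum vanishes.
-/

open Matrix Finset

lemma dot_eq_dotProduct {p n : ℕ} (a x : Fin n → ZMod p) : dot a x = a ⬝ᵥ x := rfl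

section Zeta

lemma isPrimitiveRoot_zeta {m : ℕ} (hm : m ≠ 0) : IsPrimitiveRoot (zeta m) m := by
  simpa [zeta, mul_comm, mul_div_assoc] using Complex.isPrimitiveRoot_exp m hm

lemma zeta_mul_pow (m : ℕ) {d : ℕ} (hd : d ≠ 0) : zeta (m * d) ^ d = zeta m := by
  rw [zeta, zeta, ← Complex.exp_nat_mul]
  rcases eq_or_ne m 0 with rfl | hm
  · simp
  · congr 1
    push_cast
    field_simp

variable (m : ℕ) [NeZero m]

lemma zeta_pow_val_add (u v : ZMod m) :
    zeta m ^ (u + v).val = zeta m ^ u.val * zeta m ^ v.val := by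
  rw [ZMod.val_add, ← pow_add, ← pow_eq_pow_mod _ (isPrimitiveRoot_zeta (NeZero.ne m)).pow_eq_one]

lemma zeta_pow_val_natCast (a : ℕ) : zeta m ^ (a : ZMod m).val = zeta m ^ a := by
  rw [ZMod.val_natCast, ← pow_eq_pow_mod _ (isPrimitiveRoot_zeta (NeZero.ne m)).pow_eq_one]

lemma zeta_pow_val_ne_one {u : ZMod m} (hu : u ≠ 0) : zeta m ^ u.val ≠ 1 := by
  rw [Ne, (isPrimitiveRoot_zeta (NeZero.ne m)).pow_eq_one_iff_dvd]
  exact fun h => hu ((ZMod.val_eq_zero u).mp (Nat.eq_zero_of_dvd_of_lt h (ZMod.val_lt u)))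

end Zeta

lemma sum_eq_zero_of_add_right_eq_mul {G K : Type*} [AddGroup G] [Fintype G]
    [CommRing K] [IsDomain K] {F : G → K} (v : G) {c : K} (hc : c ≠ 1)
    (hF : ∀ y, F (y + v) = c * F y) : ∑ y, F y = 0 := by
  have h : ∑ y, F y = c * ∑ y, F y := by
    rw [mul_sum, ← Equiv.sum_comp (Equiv.addRight v) F]
    exact sum_congr rfl fun y _ => hF y
  have : (c - 1) * ∑ y, F y = 0 := by linear_combination -h
  exact (mul_eq_zero.mp this).resolve_left (sub_ne_zero.mpr hc)

lemma AddMonoidHom.sum_comp_of_surjective {V W M : Type*} [AddGroup V] [Fintype V]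
    [AddGroup W] [Fintype W] [AddCommMonoid M] (φ : V →+ W) (hφ : Function.Surjective φ)
    (F : W → M) :
    ∑ y, F (φ y) = (Fintype.card V / Fintype.card W) • ∑ z, F z := by
  classical
  have hfiber (z : W) : #{y | φ y = z} = #{y | φ y = 0} :=
    AddMonoidHom.card_fiber_eq_of_mem_range φ (hφ z) (hφ 0)
  have hcard : Fintype.card V = Fintype.card W * #{y | φ y = 0} := by
    rw [← card_univ,
      card_eq_sum_card_fiberwise (f := φ) (t := univ) fun _ _ => mem_coe.2 (mem_univ _)]
    simp only [hfiber, sum_const, card_univ, smul_eq_mul]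
  rw [hcard, Nat.mul_div_cancel_left _ Fintype.card_pos, sum_comp, smul_sum,
    image_univ_of_surjective hφ]
  exact sum_congr rfl fun z _ => by rw [hfiber]

lemma Matrix.exists_vecMul_eq_of_forall_mulVec_eq_zero {K m n : Type*} [Field K] [Fintype m]
    [DecidableEq m] [Fintype n] [DecidableEq n] (R : Matrix m n K) {b : n → K}
    (hb : ∀ v, R *ᵥ v = 0 → b ⬝ᵥ v = 0) : ∃ c, c ᵥ* R = b := by
  have hmem : dotProductEquiv K n b ∈ LinearMap.range R.mulVecLin.dualMap := by
    rw [LinearMap.range_dualMap_eq_dualAnnihilator_ker, Submodule.mem_dualAnnihilator]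
    exact hb
  obtain ⟨ψ, hψ⟩ := hmem
  refine ⟨(dotProductEquiv K m).symm ψ,
    (dotProductEquiv K n).injective (LinearMap.ext fun v => ?_)⟩
  have := LinearMap.congr_fun hψ v
  simp only [LinearMap.dualMap_apply, mulVecLin_apply] at this
  rw [← this, dotProductEquiv_apply_apply, ← dotProduct_mulVec]
  conv_rhs => rw [← (dotProductEquiv K m).apply_symm_apply ψ]
  rfl

section Walsh

variable {p k n : ℕ} [Fact p.Prime]

lemma walsh_add_dot (hk : 1 ≤ k) (h : (Fin n → ZMod p) → ZMod (p ^ k))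
    (t a : Fin n → ZMod p) :
    walsh p n k
        (fun x => h x + (p : ZMod (p ^ k)) ^ (k - 1) * (((dot x t).val : ℕ) : ZMod (p ^ k))) a =
      walsh p n k h (a - t) := by
  have hζ : zeta (p ^ k) ^ p ^ (k - 1) = zeta p := by
    simpa [← pow_succ', Nat.sub_add_cancel hk] using
      zeta_mul_pow p (pow_ne_zero (k - 1) (NeZero.ne p))
  refine sum_congr rfl fun x _ => ?_
  have hdot : -dot (a - t) x = dot x t + -dot a x := by
    simp only [dot_eq_dotProduct, sub_dotProduct, dotProduct_comm x t]
    ring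
  dsimp only
  rw [← Nat.cast_pow, ← Nat.cast_mul, zeta_pow_val_add, zeta_pow_val_natCast, pow_mul, hζ, hdot,
    zeta_pow_val_add]
  ring

lemma walsh_comp_mulVec_of_isUnit (h : (Fin n → ZMod p) → ZMod (p ^ k))
    {M : Matrix (Fin n) (Fin n) (ZMod p)} (hM : IsUnit M) (a : Fin n → ZMod p) :
    walsh p n k (fun x => h (M *ᵥ x)) a = walsh p n k h (a ᵥ* M⁻¹) := by
  refine Fintype.sum_bijective (M *ᵥ ·)
    ⟨mulVec_injective_iff_isUnit.2 hM, mulVec_surjective_iff_isUnit.2 hM⟩ _ _ fun x => ?_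
  have hdot : a ᵥ* M⁻¹ ⬝ᵥ M *ᵥ x = a ⬝ᵥ x := by
    rw [← dotProduct_mulVec, mulVec_mulVec, nonsing_inv_mul _ ((isUnit_iff_isUnit_det M).1 hM),
      one_mulVec]
  simp only [dot_eq_dotProduct, hdot]

lemma walsh_comp_mulVec_vecMul {m : ℕ} {R : Matrix (Fin m) (Fin n) (ZMod p)}
    (hR : Function.Surjective R.mulVec) (g : (Fin m → ZMod p) → ZMod (p ^ k))
    (c : Fin m → ZMod p) :
    walsh p n k (fun y => g (R *ᵥ y)) (c ᵥ* R) = (p ^ (n - m) : ℕ) * walsh p m k g c := by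
  have hp : p.Prime := Fact.out
  have hcard : Fintype.card (Fin n → ZMod p) / Fintype.card (Fin m → ZMod p) = p ^ (n - m) := by
    have hle := Fintype.card_le_of_surjective _ hR
    simp only [Fintype.card_fun, ZMod.card, Fintype.card_fin] at hle ⊢
    exact Nat.pow_div ((Nat.pow_le_pow_iff_right hp.one_lt).1 hle) hp.pos
  simp only [walsh, dot_eq_dotProduct, ← dotProduct_mulVec]
  rw [← nsmul_eq_mul, ← hcard]
  exact R.mulVecLin.toAddMonoidHom.sum_comp_of_surjective hR
    (fun z => zeta (p ^ k) ^ (g z).val * zeta p ^ (-(c ⬝ᵥ z)).val)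

lemma walsh_comp_mulVec_eq_zero {m : ℕ} (R : Matrix (Fin m) (Fin n) (ZMod p))
    (g : (Fin m → ZMod p) → ZMod (p ^ k)) {b : Fin n → ZMod p} (hb : ∀ c, c ᵥ* R ≠ b) :
    walsh p n k (fun y => g (R *ᵥ y)) b = 0 := by
  obtain ⟨v, hv, hbv⟩ : ∃ v, R *ᵥ v = 0 ∧ b ⬝ᵥ v ≠ 0 := by
    by_contra! h
    obtain ⟨c, hc⟩ := R.exists_vecMul_eq_of_forall_mulVec_eq_zero h
    exact hb c hc
  refine sum_eq_zero_of_add_right_eq_mul v (zeta_pow_val_ne_one p (neg_ne_zero.2 hbv))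
    fun y => ?_
  simp only [dot_eq_dotProduct, mulVec_add, hv, add_zero, dotProduct_add, neg_add]
  rw [zeta_pow_val_add]
  ring

end Walsh

open Matrix in
theorem stmt6_general (p n k s : ℕ) [Fact (Nat.Prime p)] (hk : 1 ≤ k) (hsn : s < n)
    (g : (Fin (n - s) → ZMod p) → ZMod (p ^ k))
    (hg : ∀ b, ‖walsh p (n - s) k g b‖ = (p : ℝ) ^ (((n : ℝ) - (s : ℝ)) / 2))
    (M : Matrix (Fin n) (Fin n) (ZMod p)) (hM : IsUnit M)
    (R : Matrix (Fin (n - s)) (Fin n) (ZMod p))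
    (hR : Function.Surjective (fun x : Fin n → ZMod p => Matrix.vecMul x Rᵀ))
    (t : Fin n → ZMod p)
    (f : (Fin n → ZMod p) → ZMod (p ^ k))
    (hf : ∀ x, f x = g (Matrix.vecMul (Matrix.vecMul x Mᵀ) Rᵀ) +
      (p : ZMod (p ^ k)) ^ (k - 1) * (((dot x t).val : ℕ) : ZMod (p ^ k))) :
    ∀ a : Fin n → ZMod p,
      ((∃ c : Fin (n - s) → ZMod p, a = t + Matrix.vecMul (Matrix.vecMul c R) M) →
        ‖walsh p n k f a‖ = (p : ℝ) ^ (((n : ℝ) + (s : ℝ)) / 2)) ∧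
      ((¬ ∃ c : Fin (n - s) → ZMod p, a = t + Matrix.vecMul (Matrix.vecMul c R) M) →
        walsh p n k f a = 0) := by
  intro a
  simp only [vecMul_transpose] at hR hf
  have hwalsh : walsh p n k f a = walsh p n k (fun y => g (R *ᵥ y)) ((a - t) ᵥ* M⁻¹) := by
    rw [funext hf, walsh_add_dot hk, walsh_comp_mulVec_of_isUnit (fun y => g (R *ᵥ y)) hM]
  have hcoset : (∃ c, a = t + c ᵥ* R ᵥ* M) ↔ ∃ c, c ᵥ* R = (a - t) ᵥ* M⁻¹ := by
    have hdet := (isUnit_iff_isUnit_det M).1 hM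
    refine exists_congr fun c => ⟨fun h => ?_, fun h => ?_⟩
    · rw [h, add_sub_cancel_left, vecMul_vecMul, mul_nonsing_inv _ hdet, vecMul_one]
    · rw [h, vecMul_vecMul, nonsing_inv_mul _ hdet, vecMul_one, add_sub_cancel]
  refine ⟨fun ha => ?_, fun ha => ?_⟩
  · obtain ⟨c, hc⟩ := hcoset.1 ha
    have hp : (0 : ℝ) < p := Nat.cast_pos.2 (Fact.out : p.Prime).pos
    rw [hwalsh, ← hc, walsh_comp_mulVec_vecMul hR, Nat.sub_sub_self hsn.le, norm_mul,
      Complex.norm_natCast, hg c, Nat.cast_pow, ← Real.rpow_natCast, ← Real.rpow_add hp]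
    ring_nf
  · rw [hwalsh]
    exact walsh_comp_mulVec_eq_zero R g fun c hc => ha (hcoset.2 ⟨c, hc⟩)

open Matrix in
theorem stmt6 (p n k s : ℕ) [Fact (Nat.Prime p)] (hk : 1 ≤ k) (hs : 0 < s) (hsn : s < n)
    (hps : p = 2 → Even (n + s))
    (g : (Fin (n - s) → ZMod p) → ZMod (p ^ k))
    (hg : ∀ b, ‖walsh p (n - s) k g b‖ = (p : ℝ) ^ (((n : ℝ) - (s : ℝ)) / 2))
    (M : Matrix (Fin n) (Fin n) (ZMod p)) (hM : IsUnit M)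
    (R : Matrix (Fin (n - s)) (Fin n) (ZMod p))
    (hR : Function.Surjective (fun x : Fin n → ZMod p => Matrix.vecMul x Rᵀ))
    (t : Fin n → ZMod p)
    (f : (Fin n → ZMod p) → ZMod (p ^ k))
    (hf : ∀ x, f x = g (Matrix.vecMul (Matrix.vecMul x Mᵀ) Rᵀ) +
      (p : ZMod (p ^ k)) ^ (k - 1) * (((dot x t).val : ℕ) : ZMod (p ^ k))) :
    ∀ a : Fin n → ZMod p,
      ((∃ c : Fin (n - s) → ZMod p, a = t + Matrix.vecMul (Matrix.vecMul c R) M) →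
        ‖walsh p n k f a‖ = (p : ℝ) ^ (((n : ℝ) + (s : ℝ)) / 2)) ∧
      ((¬ ∃ c : Fin (n - s) → ZMod p, a = t + Matrix.vecMul (Matrix.vecMul c R) M) →
        walsh p n k f a = 0) :=
  stmt6_general p n k s hk hsn g hg M hM R hR t f hf
end

section
/- Let f : 𝔽_{p^n} × 𝔽_{p^n} → ZMod (p^k) be defined by f(x₁, x₂) = p^{k−1}·Tr(α x₁ π(x₂)) + g(x₂), where α ∈ 𝔽_{p^n}^*, π is a permutation of 𝔽_{p^n}, Tr is the absolute trace 𝔽_{p^n} → 𝔽_p, and g : 𝔽_{p^n} → ZMod (p^k) is arbitrary. Then f is a generalized bent function, and for all (a₁, a₂), W_f(a₁, a₂) = p^n ζ_{p^k}^{f*(a₁,a₂)} where f*(x₁,x₂) = −p^{k−1}·Tr(x₂ π^{−1}(α^{−1} x₁)) + g(π^{−1}(α^{−1} x₁)). -/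
/-- Walsh transform on `F × F` for a finite field `F` of characteristic `p`,
with inner product given by the absolute trace. -/
noncomputable def walshF (p k : ℕ) (F : Type) [Field F] [Fintype F] [Algebra (ZMod p) F]
    (f : F × F → ZMod (p ^ k)) (a : F × F) : ℂ :=
  ∑ x : F × F, zeta (p ^ k) ^ (f x).val *
    zeta p ^ ((-(Algebra.trace (ZMod p) F (a.1 * x.1) +
      Algebra.trace (ZMod p) F (a.2 * x.2))).val)

/-!
The standard character of `ZMod (p ^ k)`, `j ↦ ζ_{p^k}^{j.val}`, restricts along
`t ↦ p^{k-1} t` to the standard character of `ZMod p`. Hence the part of `f` that is linear in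
`x₁` contributes the additive character `x₁ ↦ ψ(Tr(x₁ (α π(x₂) - a₁)))` of `F`, whose sum over
`x₁` is `p^n` if `π(x₂) = α⁻¹ a₁` and `0` otherwise: only `x₂ = π⁻¹(α⁻¹ a₁)` survives in
`W_f(a₁, a₂)`.
-/

open ZMod AddChar

lemma zeta_pow_val {N : ℕ} [NeZero N] (j : ZMod N) : zeta N ^ j.val = stdAddChar j := by
  rw [zeta, ← Complex.exp_nat_mul, stdAddChar_apply, toCircle_apply]
  ring_nf

lemma norm_stdAddChar {N : ℕ} [NeZero N] (j : ZMod N) : ‖stdAddChar j‖ = 1 :=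
  Circle.norm_coe _

lemma stdAddChar_pow_pred_mul_val {p k : ℕ} [NeZero p] (hk : 1 ≤ k) (t : ZMod p) :
    stdAddChar ((p : ZMod (p ^ k)) ^ (k - 1) * (t.val : ZMod (p ^ k))) = stdAddChar t := by
  have hp : (p : ℂ) ≠ 0 := NeZero.ne _
  have hpk : (p : ℂ) ^ k = (p : ℂ) ^ (k - 1) * p := by rw [← pow_succ, Nat.sub_add_cancel hk]
  conv_rhs => rw [← natCast_zmod_val t]
  rw [← Nat.cast_pow, ← Nat.cast_mul, stdAddChar_apply, stdAddChar_apply, toCircle_natCast,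
    toCircle_natCast]
  push_cast
  rw [hpk]
  field_simp

section TraceCharacter

variable (p : ℕ) [Fact p.Prime] (F : Type*) [Field F] [Algebra (ZMod p) F]

noncomputable def traceChar : AddChar F ℂ :=
  stdAddChar.compAddMonoidHom (Algebra.trace (ZMod p) F).toAddMonoidHom

lemma traceChar_apply (x : F) : traceChar p F x = stdAddChar (Algebra.trace (ZMod p) F x) := rfl

lemma isPrimitive_traceChar [Finite F] : (traceChar p F).IsPrimitive := by
  obtain ⟨x, hx⟩ := Algebra.trace_surjective (ZMod p) F 1
  refine IsPrimitive.of_ne_one (ne_one_iff.2 ⟨x, ?_⟩)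
  rw [traceChar_apply, hx, ← (stdAddChar (N := p)).map_zero_eq_one]
  exact injective_stdAddChar.ne one_ne_zero

lemma sum_traceChar_mul [Fintype F] [DecidableEq F] (c : F) :
    ∑ x : F, traceChar p F (x * c) = if c = 0 then (Fintype.card F : ℂ) else 0 := by
  simpa using sum_mulShift c (isPrimitive_traceChar p F)

end TraceCharacter

section Walsh

variable {p k : ℕ} [Fact p.Prime] {F : Type} [Field F] [Fintype F] [Algebra (ZMod p) F]

lemma walshF_eq_sum_traceChar (f : F × F → ZMod (p ^ k)) (a : F × F) :
    walshF p k F f a =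
      ∑ x : F × F, stdAddChar (f x) * traceChar p F (-(a.1 * x.1 + a.2 * x.2)) := by
  have : NeZero (p ^ k) := ⟨pow_ne_zero _ (Fact.out : p.Prime).ne_zero⟩
  simp only [walshF, zeta_pow_val, traceChar_apply, map_add, map_neg]

theorem walshF_maioranaMcFarland (hk : 1 ≤ k) {α : F} (hα : α ≠ 0) (π : Equiv.Perm F)
    (g : F → ZMod (p ^ k)) (a : F × F) :
    walshF p k F (fun x ↦ (p : ZMod (p ^ k)) ^ (k - 1) *
        (((Algebra.trace (ZMod p) F (α * x.1 * π x.2)).val : ℕ) : ZMod (p ^ k)) + g x.2) a =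
      Fintype.card F * (traceChar p F (-(a.2 * π.symm (α⁻¹ * a.1))) *
        stdAddChar (g (π.symm (α⁻¹ * a.1)))) := by
  classical
  set b := π.symm (α⁻¹ * a.1)
  have hb (y : F) : α * π y - a.1 = 0 ↔ y = b := by
    rw [sub_eq_zero, Equiv.eq_symm_apply, eq_inv_mul_iff_mul_eq₀ hα]
  have hterm (x₁ x₂ : F) :
      stdAddChar ((p : ZMod (p ^ k)) ^ (k - 1) *
          (((Algebra.trace (ZMod p) F (α * x₁ * π x₂)).val : ℕ) : ZMod (p ^ k)) + g x₂) *
        traceChar p F (-(a.1 * x₁ + a.2 * x₂)) =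
      traceChar p F (x₁ * (α * π x₂ - a.1)) *
        (traceChar p F (-(a.2 * x₂)) * stdAddChar (g x₂)) := by
    rw [map_add_eq_mul, stdAddChar_pow_pred_mul_val hk, ← traceChar_apply, mul_right_comm,
      ← map_add_eq_mul, show α * x₁ * π x₂ + -(a.1 * x₁ + a.2 * x₂) =
        x₁ * (α * π x₂ - a.1) + -(a.2 * x₂) by ring, map_add_eq_mul]
    ring
  rw [walshF_eq_sum_traceChar, Fintype.sum_prod_type, Finset.sum_comm]
  simp only [hterm, ← Finset.sum_mul, sum_traceChar_mul, hb, ite_mul, zero_mul,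
    Finset.sum_ite_eq', Finset.mem_univ, if_true]

end Walsh

theorem stmt9_general (p n k : ℕ) [Fact (Nat.Prime p)] (hk : 1 ≤ k)
    (F : Type) [Field F] [Fintype F] [Algebra (ZMod p) F]
    (hcard : Fintype.card F = p ^ n)
    (α : F) (hα : α ≠ 0) (π : Equiv.Perm F) (g : F → ZMod (p ^ k))
    (f : F × F → ZMod (p ^ k))
    (hfdef : ∀ x : F × F, f x = (p : ZMod (p ^ k)) ^ (k - 1) *
        (((Algebra.trace (ZMod p) F (α * x.1 * π x.2)).val : ℕ) : ZMod (p ^ k)) + g x.2) :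
    (∀ a : F × F, ‖walshF p k F f a‖ = (p : ℝ) ^ (n : ℕ)) ∧
    ∀ a : F × F, walshF p k F f a = (p : ℂ) ^ (n : ℕ) *
      zeta (p ^ k) ^
        ((-((p : ZMod (p ^ k)) ^ (k - 1) *
            (((Algebra.trace (ZMod p) F (a.2 * π.symm (α⁻¹ * a.1))).val : ℕ) : ZMod (p ^ k))) +
          g (π.symm (α⁻¹ * a.1))).val) := by
  have : NeZero (p ^ k) := ⟨pow_ne_zero _ (Fact.out : p.Prime).ne_zero⟩
  obtain rfl : f = _ := funext hfdef
  refine ⟨fun a ↦ ?_, fun a ↦ ?_⟩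
  · rw [walshF_maioranaMcFarland hk hα, hcard, traceChar_apply, norm_mul, norm_mul,
      norm_stdAddChar, norm_stdAddChar]
    simp
  · rw [walshF_maioranaMcFarland hk hα, hcard, zeta_pow_val, map_add_eq_mul]
    simp only [map_neg_eq_inv, stdAddChar_pow_pred_mul_val hk, traceChar_apply, Nat.cast_pow]

theorem stmt9 (p n k : ℕ) [Fact (Nat.Prime p)] (hn : 1 ≤ n) (hk : 1 ≤ k)
    (F : Type) [Field F] [Fintype F] [Algebra (ZMod p) F]
    (hcard : Fintype.card F = p ^ n)
    (α : F) (hα : α ≠ 0) (π : Equiv.Perm F) (g : F → ZMod (p ^ k))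
    (f : F × F → ZMod (p ^ k))
    (hfdef : ∀ x : F × F, f x = (p : ZMod (p ^ k)) ^ (k - 1) *
        (((Algebra.trace (ZMod p) F (α * x.1 * π x.2)).val : ℕ) : ZMod (p ^ k)) + g x.2) :
    (∀ a : F × F, ‖walshF p k F f a‖ = (p : ℝ) ^ (n : ℕ)) ∧
    ∀ a : F × F, walshF p k F f a = (p : ℂ) ^ (n : ℕ) *
      zeta (p ^ k) ^
        ((-((p : ZMod (p ^ k)) ^ (k - 1) *
            (((Algebra.trace (ZMod p) F (a.2 * π.symm (α⁻¹ * a.1))).val : ℕ) : ZMod (p ^ k))) +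
          g (π.symm (α⁻¹ * a.1))).val) :=
  stmt9_general p n k hk F hcard α hα π g f hfdef
end
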